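/- Let τ : B^{⊗(q+1)} → ℂ be a Hochschild q-cocycle on B, and define the ℂ-linear map τ^r : M_r(B)^{⊗(q+1)} → ℂ on pure tensors by τ^r((A_0⊗b_0)⊗⋯⊗(A_q⊗b_q)) = tr(A_0 A_1 ⋯ A_q) · τ(b_0⊗⋯⊗b_q), where the A_i are r×r complex matrices and b_i ∈ B. Then: (1) τ^r is a Hochschild q-cocycle on M_r(B), i.e. τ^r ∘ b = 0 on M_r(B)^{⊗(q+2)}; and (2) if τ is normalized, i.e. τ(b_0⊗⋯⊗b_q) = 0 whenever b_j = 1 for some j ≥ 1, then τ^r vanishes on every pure tensor whose j-th factor, for some j ≥ 1, has the form A⊗1 with A an r×r complex matrix. -/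

import Mathlib

open scoped TensorProduct
open PiTensorProduct

/-- The `j`-th inner face of the Hochschild boundary. -/
def hochFace {A : Type*} [Ring A] {n : ℕ} (v : Fin (n + 1) → A) (j : Fin n) : Fin n → A :=
  fun i =>
    if (i : ℕ) < (j : ℕ) then v i.castSucc
    else if i = j then v i.castSucc * v i.succ
    else v i.succ

/-- The last (cyclic) face of the Hochschild boundary. -/
def hochLast {A : Type*} [Ring A] {n : ℕ} (v : Fin (n + 1) → A) : Fin n → A :=
  fun i => if (i : ℕ) = 0 then v (Fin.last n) * v 0 else v i.castSucc

theorem prod_hochFace {A : Type*} [Ring A] :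
    ∀ (n : ℕ) (M : Fin (n + 1) → A) (j : Fin n),
      (List.ofFn (hochFace M j)).prod = (List.ofFn M).prod := by
  intro n
  induction n with
  | zero => intro M j; exact j.elim0
  | succ n ih =>
    intro M j
    rcases Fin.eq_zero_or_eq_succ j with h | ⟨j', rfl⟩
    · subst h
      rw [List.ofFn_succ (f := hochFace M 0)]
      have ht : (fun i : Fin n => hochFace M 0 i.succ) = fun i : Fin n => M i.succ.succ := by
        funext i
        simp [hochFace, Fin.succ_ne_zero]
      have hh : hochFace M 0 0 = M 0 * M 1 := by simp [hochFace]
      rw [ht, hh, List.ofFn_succ (f := M), List.ofFn_succ (f := fun i => M i.succ)]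
      simp [mul_assoc]
    · rw [List.ofFn_succ (f := hochFace M j'.succ)]
      have hh : hochFace M j'.succ 0 = M 0 := by simp [hochFace]
      have ht : (fun i : Fin n => hochFace M j'.succ i.succ) =
          hochFace (fun i => M i.succ) j' := by
        funext i
        simp only [hochFace, Fin.val_succ]
        rcases lt_trichotomy (i : ℕ) (j' : ℕ) with h | h | h
        · rw [if_pos (show (i:ℕ)+1 < (j':ℕ)+1 by omega), if_pos h, Fin.succ_castSucc]
        · have hij : i = j' := Fin.ext h
          have hij2 : i.succ = j'.succ := by rw [hij]
          rw [if_neg (show ¬((i:ℕ)+1 < (j':ℕ)+1) by omega), if_pos hij2,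
            if_neg (show ¬((i:ℕ) < (j':ℕ)) by omega), if_pos hij, Fin.succ_castSucc]
        · have hij2 : i.succ ≠ j'.succ := by
            intro hh2; exact absurd (Fin.succ_injective _ hh2) (by intro hh3; omega)
          have hij : i ≠ j' := by intro hh4; omega
          rw [if_neg (show ¬((i:ℕ)+1 < (j':ℕ)+1) by omega), if_neg hij2,
            if_neg (show ¬((i:ℕ) < (j':ℕ)) by omega), if_neg hij]
      rw [hh, ht, List.prod_cons, ih, List.ofFn_succ (f := M), List.prod_cons]

theorem trace_prod_hochLast {r : ℕ} :
    ∀ (n : ℕ) (M : Fin (n + 2) → Matrix (Fin r) (Fin r) ℂ),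
      ((List.ofFn (hochLast M)).prod).trace = ((List.ofFn M).prod).trace := by
  intro n M
  have h1 : List.ofFn (hochLast M) =
      (M (Fin.last (n + 1)) * M 0) :: List.ofFn (fun i : Fin n => M i.succ.castSucc) := by
    rw [List.ofFn_succ (f := hochLast M)]
    have hh : hochLast M 0 = M (Fin.last (n + 1)) * M 0 := by simp [hochLast]
    have ht : (fun i : Fin n => hochLast M i.succ) =
        fun i : Fin n => M i.succ.castSucc := by
      funext i
      simp [hochLast, Fin.succ_ne_zero]
    rw [hh, ht]
  have h2 : List.ofFn M =
      (M 0 :: List.ofFn (fun i : Fin n => M i.succ.castSucc)).concat (M (Fin.last (n + 1))) := by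
    rw [List.ofFn_succ' M]
    congr 1
    rw [List.ofFn_succ]
    congr 1
  rw [h1, h2]
  simp only [List.concat_eq_append, List.prod_append, List.prod_cons, List.prod_singleton,
    List.prod_nil, mul_one]
  rw [mul_assoc, Matrix.trace_mul_comm]

theorem hochFace_tmul {Bt : Type*} [Ring Bt] [Algebra ℂ Bt] {r n : ℕ}
    (M : Fin (n + 1) → Matrix (Fin r) (Fin r) ℂ) (v : Fin (n + 1) → Bt) (j : Fin n) :
    hochFace (fun i => M i ⊗ₜ[ℂ] v i) j = fun i => hochFace M j i ⊗ₜ[ℂ] hochFace v j i := by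
  funext i
  simp only [hochFace]
  split_ifs <;> simp [Algebra.TensorProduct.tmul_mul_tmul]

theorem hochLast_tmul {Bt : Type*} [Ring Bt] [Algebra ℂ Bt] {r n : ℕ}
    (M : Fin (n + 1) → Matrix (Fin r) (Fin r) ℂ) (v : Fin (n + 1) → Bt) :
    hochLast (fun i => M i ⊗ₜ[ℂ] v i) = fun i => hochLast M i ⊗ₜ[ℂ] hochLast v i := by
  funext i
  simp only [hochLast]
  split_ifs <;> simp [Algebra.TensorProduct.tmul_mul_tmul]

/-- **Matrix extension of a Hochschild cocycle.**
If `τ : B^{⊗(q+1)} → ℂ` is a Hochschild `q`-cocycle on a unital ℂ-algebra `B` and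
`τʳ((A₀⊗b₀)⊗⋯⊗(A_q⊗b_q)) = tr(A₀⋯A_q)·τ(b₀⊗⋯⊗b_q)` on `M_r(B) = M_r(ℂ) ⊗ B`, then
(1) `τʳ` is a Hochschild `q`-cocycle on `M_r(B)`, and (2) if `τ` is normalized then `τʳ`
vanishes on pure tensors having a factor `A ⊗ 1` in some slot `j ≥ 1`. -/
theorem matrix_cocycle_extension (B : Type) [Ring B] [Algebra ℂ B] (r q : ℕ) (hr : 1 ≤ r)
    (τ : (⨂[ℂ]^(q + 1) B) →ₗ[ℂ] ℂ)
    (bB : (⨂[ℂ]^(q + 2) B) →ₗ[ℂ] ⨂[ℂ]^(q + 1) B)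
    (hbB : ∀ v : Fin (q + 2) → B,
      bB (tprod ℂ v) =
        (∑ j : Fin (q + 1), ((-1 : ℂ) ^ (j : ℕ)) • tprod ℂ (hochFace v j)) +
          ((-1 : ℂ) ^ (q + 1)) • tprod ℂ (hochLast v))
    (hτ : τ.comp bB = 0)
    (τr : (⨂[ℂ]^(q + 1) (Matrix (Fin r) (Fin r) ℂ ⊗[ℂ] B)) →ₗ[ℂ] ℂ)
    (hτr : ∀ (M : Fin (q + 1) → Matrix (Fin r) (Fin r) ℂ) (v : Fin (q + 1) → B),
      τr (tprod ℂ fun i => M i ⊗ₜ[ℂ] v i) =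
        Matrix.trace (List.ofFn M).prod * τ (tprod ℂ v))
    (bM : (⨂[ℂ]^(q + 2) (Matrix (Fin r) (Fin r) ℂ ⊗[ℂ] B)) →ₗ[ℂ]
        ⨂[ℂ]^(q + 1) (Matrix (Fin r) (Fin r) ℂ ⊗[ℂ] B))
    (hbM : ∀ v : Fin (q + 2) → Matrix (Fin r) (Fin r) ℂ ⊗[ℂ] B,
      bM (tprod ℂ v) =
        (∑ j : Fin (q + 1), ((-1 : ℂ) ^ (j : ℕ)) • tprod ℂ (hochFace v j)) +
          ((-1 : ℂ) ^ (q + 1)) • tprod ℂ (hochLast v)) :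
    τr.comp bM = 0 ∧
      ((∀ (v : Fin (q + 1) → B) (j : Fin (q + 1)), (j : ℕ) ≠ 0 → v j = 1 →
          τ (tprod ℂ v) = 0) →
        ∀ (M : Fin (q + 1) → Matrix (Fin r) (Fin r) ℂ) (v : Fin (q + 1) → B)
          (j : Fin (q + 1)), (j : ℕ) ≠ 0 → v j = 1 →
          τr (tprod ℂ fun i => M i ⊗ₜ[ℂ] v i) = 0) := by
  have key : ∀ (M : Fin (q + 2) → Matrix (Fin r) (Fin r) ℂ) (v : Fin (q + 2) → B),
      τr (bM (tprod ℂ fun i => M i ⊗ₜ[ℂ] v i)) = 0 := by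
    intro M v
    have h0 : τ (bB (tprod ℂ v)) = 0 := by
      have := LinearMap.congr_fun hτ (tprod ℂ v)
      simpa using this
    rw [hbB] at h0
    simp only [map_add, map_sum, map_smul, smul_eq_mul] at h0
    rw [hbM]
    simp only [map_add, map_sum, map_smul, hochFace_tmul, hochLast_tmul, hτr, smul_eq_mul,
      prod_hochFace, trace_prod_hochLast]
    have hs : ∑ j : Fin (q + 1),
        (-1 : ℂ) ^ (j : ℕ) * ((List.ofFn M).prod.trace * τ (tprod ℂ (hochFace v j)))
        = (List.ofFn M).prod.trace *
            ∑ j : Fin (q + 1), (-1 : ℂ) ^ (j : ℕ) * τ (tprod ℂ (hochFace v j)) := by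
      rw [Finset.mul_sum]
      exact Finset.sum_congr rfl fun j _ => by ring
    rw [hs]
    linear_combination (List.ofFn M).prod.trace * h0
  constructor
  · apply PiTensorProduct.ext
    apply Module.Basis.ext_multilinear
      (fun _ => (Matrix.stdBasis ℂ (Fin r) (Fin r)).tensorProduct (Module.Basis.ofVectorSpace ℂ B))
    intro w
    simp only [LinearMap.compMultilinearMap_apply, LinearMap.comp_apply, LinearMap.zero_apply,
      Module.Basis.tensorProduct_apply']
    exact key (fun i => Matrix.stdBasis ℂ (Fin r) (Fin r) (w i).1)
      (fun i => Module.Basis.ofVectorSpace ℂ B (w i).2)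
  · intro hnorm M v j hj hv
    rw [hτr, hnorm v j hj hv, mul_zero]
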